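/- Renaming preserves bisimilarity: if Γ,Δ ⊨ (M ▹ P) ≲^n (N ▹ Q) then Γ,(Δσ_Γ) ⊨ (M ▹ P)σ_Γ ≲^n (N ▹ Q)σ_Γ for any bijection σ_Γ on channel names fixing every channel in dom(Γ). -/
import Mathlib


/-! # πcr : a π-calculus with explicit resource management (costed semantics) -/

abbrev Chan := ℕ
abbrev Var := ℕ

inductive Ident : Type
  | ch (c : Chan)
  | var (x : Var)
deriving DecidableEq

/-- Type attributes: unrestricted ω, affine 1, unique-after-i •ᵢ. -/
inductive Attr : Type
  | unr
  | aff
  | unq (i : ℕ)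
deriving DecidableEq

/-- Types: channel types [T⃗]^a, recursive types μX.C (de Bruijn), type
variables, and the process type. -/
inductive Ty : Type
  | chan (args : List Ty) (a : Attr)
  | mu (body : Ty)
  | tvar (n : ℕ)
  | proc

mutual
  /-- Substitute `R` for the de Bruijn type variable `n`. -/
  def Ty.substT (n : ℕ) (R : Ty) : Ty → Ty
    | .chan ts a => .chan (Ty.substTList n R ts) a
    | .mu T => .mu (Ty.substT (n + 1) R T)
    | .tvar m => if m = n then R else .tvar m
    | .proc => .proc
  def Ty.substTList (n : ℕ) (R : Ty) : List Ty → List Ty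
    | [] => []
    | t :: ts => Ty.substT n R t :: Ty.substTList n R ts
end

/-- Equi-recursive type equivalence: least type-congruence satisfying eRec. -/
inductive TyEquiv : Ty → Ty → Prop
  | refl (T) : TyEquiv T T
  | symm : TyEquiv T T' → TyEquiv T' T
  | trans : TyEquiv T T' → TyEquiv T' T'' → TyEquiv T T''
  | unfold (T) : TyEquiv (.mu T) (Ty.substT 0 (.mu T) T)
  | chanCong (ts₁ ts₂ : List Ty) (a : Attr) :
      TyEquiv T T' → TyEquiv (.chan (ts₁ ++ T :: ts₂) a) (.chan (ts₁ ++ T' :: ts₂) a)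
  | muCong : TyEquiv T T' → TyEquiv (.mu T) (.mu T')

/-- Subtyping on attributes: •ᵢ <: •ᵢ₊₁, •ᵢ <: ω, ω <: 1. -/
inductive AttrSub : Attr → Attr → Prop
  | indx (i) : AttrSub (.unq i) (.unq (i + 1))
  | unqUnr (i) : AttrSub (.unq i) .unr
  | unrAff : AttrSub .unr .aff

/-- Subtyping on channel types (same object types). -/
inductive TySub : Ty → Ty → Prop
  | chan (ts) : AttrSub a a' → TySub (.chan ts a) (.chan ts a')

/-- Type splitting T = T₁ ∘ T₂. -/
inductive TySplit : Ty → Ty → Ty → Prop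
  | unr (ts) : TySplit (.chan ts .unr) (.chan ts .unr) (.chan ts .unr)
  | proc : TySplit .proc .proc .proc
  | unq (ts i) : TySplit (.chan ts (.unq i)) (.chan ts .aff) (.chan ts (.unq (i + 1)))

/-- Type environments: multisets of assumptions. -/
abbrev TyEnv := Multiset (Ident × Ty)

def TyEnv.domChans (Γ : TyEnv) : Set Chan := {c | ∃ T, (Ident.ch c, T) ∈ Γ}

def TyEnv.IsPartialMap (Γ : TyEnv) : Prop := (Γ.map Prod.fst).Nodup

/-- The environment structural relation Γ ≺ Γ'. -/
inductive EnvStruct : TyEnv → TyEnv → Prop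
  | refl (Γ) : EnvStruct Γ Γ
  | trans : EnvStruct Γ Γ' → EnvStruct Γ' Γ'' → EnvStruct Γ Γ''
  | con : TySplit T T₁ T₂ → EnvStruct (Γ + {(u, T)}) (Γ + {(u, T₁), (u, T₂)})
  | join : TySplit T T₁ T₂ → EnvStruct (Γ + {(u, T₁), (u, T₂)}) (Γ + {(u, T)})
  | weak (Γ u T) : EnvStruct (Γ + {(u, T)}) Γ
  | tyEq : TyEquiv T₁ T₂ → EnvStruct (Γ + {(u, T₁)}) (Γ + {(u, T₂)})
  | sub : TySub T₁ T₂ → EnvStruct (Γ + {(u, T₁)}) (Γ + {(u, T₂)})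
  | rev (Γ u ts₁ ts₂) :
      EnvStruct (Γ + {(u, Ty.chan ts₁ (.unq 0))}) (Γ + {(u, Ty.chan ts₂ (.unq 0))})

/-- Consistency of a type environment. -/
def TyEnv.Consistent (Γ : TyEnv) : Prop :=
  ∃ Γ' : TyEnv, TyEnv.IsPartialMap Γ' ∧ EnvStruct Γ' Γ

/-- πcr processes. -/
inductive Proc : Type
  | output (u : Ident) (vs : List Ident) (P : Proc)
  | input (u : Ident) (xs : List Var) (P : Proc)
  | nil
  | ifeq (u v : Ident) (P Q : Proc)
  | recur (w : Var) (P : Proc)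
  | pvar (w : Var)
  | par (P Q : Proc)
  | alloc (x : Var) (P : Proc)
  | free (u : Ident) (P : Proc)

def Ident.subst (σ : Var → Option Chan) : Ident → Ident
  | .ch c => .ch c
  | .var x => match σ x with | some d => .ch d | none => .var x

def Ident.rename (σ : Chan → Chan) : Ident → Ident
  | .ch c => .ch (σ c)
  | .var x => .var x

def Ident.vars : Ident → Set Var
  | .ch _ => ∅
  | .var x => {x}

def Ident.chans : Ident → Set Chan
  | .ch c => {c}
  | .var _ => ∅

def removeVars (σ : Var → Option Chan) (xs : List Var) : Var → Option Chan :=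
  fun x => if x ∈ xs then none else σ x

/-- Capture-avoiding substitution of channels for variables. -/
def Proc.subst : (Var → Option Chan) → Proc → Proc
  | σ, .output u vs P => .output (u.subst σ) (vs.map (Ident.subst σ)) (Proc.subst σ P)
  | σ, .input u xs P => .input (u.subst σ) xs (Proc.subst (removeVars σ xs) P)
  | _, .nil => .nil
  | σ, .ifeq u v P Q => .ifeq (u.subst σ) (v.subst σ) (Proc.subst σ P) (Proc.subst σ Q)
  | σ, .recur w P => .recur w (Proc.subst (removeVars σ [w]) P)
  | _, .pvar w => .pvar w
  | σ, .par P Q => .par (Proc.subst σ P) (Proc.subst σ Q)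
  | σ, .alloc x P => .alloc x (Proc.subst (removeVars σ [x]) P)
  | σ, .free u P => .free (u.subst σ) (Proc.subst σ P)

/-- The substitution {d⃗/x⃗}. -/
def substOf (xs : List Var) (ds : List Chan) : Var → Option Chan :=
  fun x => (xs.zip ds).lookup x

/-- Substitution of a process `R` for the process variable `w`. -/
def Proc.substProc (w : Var) (R : Proc) : Proc → Proc
  | .output u vs P => .output u vs (Proc.substProc w R P)
  | .input u xs P => if w ∈ xs then .input u xs P else .input u xs (Proc.substProc w R P)
  | .nil => .nil
  | .ifeq u v P Q => .ifeq u v (Proc.substProc w R P) (Proc.substProc w R Q)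
  | .recur w' P => if w' = w then .recur w' P else .recur w' (Proc.substProc w R P)
  | .pvar w' => if w' = w then R else .pvar w'
  | .par P Q => .par (Proc.substProc w R P) (Proc.substProc w R Q)
  | .alloc x P => if x = w then .alloc x P else .alloc x (Proc.substProc w R P)
  | .free u P => .free u (Proc.substProc w R P)

/-- Renaming of channel names in a process. -/
def Proc.rename (σ : Chan → Chan) : Proc → Proc
  | .output u vs P => .output (u.rename σ) (vs.map (Ident.rename σ)) (Proc.rename σ P)
  | .input u xs P => .input (u.rename σ) xs (Proc.rename σ P)
  | .nil => .nil
  | .ifeq u v P Q => .ifeq (u.rename σ) (v.rename σ) (Proc.rename σ P) (Proc.rename σ Q)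
  | .recur w P => .recur w (Proc.rename σ P)
  | .pvar w => .pvar w
  | .par P Q => .par (Proc.rename σ P) (Proc.rename σ Q)
  | .alloc x P => .alloc x (Proc.rename σ P)
  | .free u P => .free (u.rename σ) (Proc.rename σ P)

def listVars (l : List Ident) : Set Var := {x | ∃ u ∈ l, x ∈ Ident.vars u}

def listChans (l : List Ident) : Set Chan := {c | ∃ u ∈ l, c ∈ Ident.chans u}

/-- Free variables of a process. -/
def Proc.freeVars : Proc → Set Var
  | .output u vs P => u.vars ∪ listVars vs ∪ P.freeVars
  | .input u xs P => u.vars ∪ (P.freeVars \ {x | x ∈ xs})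
  | .nil => ∅
  | .ifeq u v P Q => u.vars ∪ v.vars ∪ P.freeVars ∪ Q.freeVars
  | .recur w P => P.freeVars \ {w}
  | .pvar w => {w}
  | .par P Q => P.freeVars ∪ Q.freeVars
  | .alloc x P => P.freeVars \ {x}
  | .free u P => u.vars ∪ P.freeVars

/-- Channel names occurring in a process. -/
def Proc.chans : Proc → Set Chan
  | .output u vs P => u.chans ∪ listChans vs ∪ P.chans
  | .input u _ P => u.chans ∪ P.chans
  | .nil => ∅
  | .ifeq u v P Q => u.chans ∪ v.chans ∪ P.chans ∪ Q.chans
  | .recur _ P => P.chans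
  | .pvar _ => ∅
  | .par P Q => P.chans ∪ Q.chans
  | .alloc _ P => P.chans
  | .free u P => u.chans ∪ P.chans

def Proc.Closed (P : Proc) : Prop := P.freeVars = ∅

/-- Structural equivalence: least congruence for parallel composition with
commutativity, associativity and nil. -/
inductive StructEq : Proc → Proc → Prop
  | refl (P) : StructEq P P
  | symm : StructEq P Q → StructEq Q P
  | trans : StructEq P Q → StructEq Q R → StructEq P R
  | comm (P Q) : StructEq (.par P Q) (.par Q P)
  | assoc (P Q R) : StructEq (.par P (.par Q R)) (.par (.par P Q) R)
  | nil (P) : StructEq (.par P .nil) P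
  | parCong : StructEq P P' → StructEq Q Q' → StructEq (.par P Q) (.par P' Q')

/-- A system: a resource environment (finite set of allocated channels)
together with a process. -/
structure System : Type where
  res : Finset Chan
  proc : Proc

def System.rename (S : System) (σ : Chan → Chan) : System :=
  ⟨S.res.image σ, S.proc.rename σ⟩

def TyEnv.rename (Γ : TyEnv) (σ : Chan → Chan) : TyEnv :=
  Γ.map (fun p => (Ident.rename σ p.1, p.2))

/-- Environments consisting only of unrestricted assumptions. -/
def TyEnv.Unrestricted (Γ : TyEnv) : Prop :=
  ∀ p ∈ Γ, (∃ ts, p.2 = Ty.chan ts .unr) ∨ p.2 = Ty.proc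

/-- The assumptions left from `u : [ts]^a` after one use: the `a − 1`
operation.  Undefined (none) for unique-now. -/
def predEnv (u : Ident) (ts : List Ty) : Attr → Option TyEnv
  | .aff => some 0
  | .unr => some {(u, Ty.chan ts .unr)}
  | .unq 0 => none
  | .unq (i + 1) => some {(u, Ty.chan ts (.unq i))}

/-- The substructural typing judgement Γ ⊢ P. -/
inductive HasTy : TyEnv → Proc → Prop
  | out {Γ Δ : TyEnv} {u : Ident} {ts : List Ty} {a : Attr} {vs : List Ident} {P : Proc} :
      predEnv u ts a = some Δ → vs.length = ts.length →
      HasTy (Γ + Δ) P →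
      HasTy (Γ + {(u, Ty.chan ts a)} + Multiset.ofList (vs.zip ts)) (.output u vs P)
  | inp {Γ Δ : TyEnv} {u : Ident} {ts : List Ty} {a : Attr} {xs : List Var} {P : Proc} :
      predEnv u ts a = some Δ → xs.length = ts.length →
      HasTy (Γ + Δ + Multiset.ofList ((xs.map Ident.var).zip ts)) P →
      HasTy (Γ + {(u, Ty.chan ts a)}) (.input u xs P)
  | par : HasTy Γ₁ P → HasTy Γ₂ Q → HasTy (Γ₁ + Γ₂) (.par P Q)
  | ifeq : (∃ T, (u, T) ∈ Γ) → (∃ T, (v, T) ∈ Γ) →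
      HasTy Γ P → HasTy Γ Q → HasTy Γ (.ifeq u v P Q)
  | recur : TyEnv.Unrestricted Γ → HasTy (Γ + {(Ident.var w, Ty.proc)}) P →
      HasTy Γ (.recur w P)
  | pvar (w) : HasTy {(Ident.var w, Ty.proc)} (.pvar w)
  | free : HasTy Γ P → HasTy (Γ + {(u, Ty.chan ts (.unq 0))}) (.free u P)
  | alloc : HasTy (Γ + {(Ident.var x, Ty.chan ts (.unq 0))}) P → HasTy Γ (.alloc x P)
  | nil : HasTy 0 .nil
  | str : HasTy Γ' P → EnvStruct Γ Γ' → HasTy Γ P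

/-- Configurations Γ ◃ M ▹ P. -/
def IsConfig (Γ : TyEnv) (S : System) : Prop :=
  S.proc.Closed ∧ TyEnv.domChans Γ ⊆ ↑S.res ∧
  ∃ Δ : TyEnv, TyEnv.Consistent (Γ + Δ) ∧ HasTy Δ S.proc ∧ TyEnv.domChans Δ ⊆ ↑S.res

/-- The costed reduction relation M ▹ P →ₖ N ▹ Q. -/
inductive Red : System → ℤ → System → Prop
  | com {M : Finset Chan} {c : Chan} {ds : List Chan} {xs : List Var} {P Q : Proc} :
      c ∈ M → xs.length = ds.length →
      Red ⟨M, .par (.output (.ch c) (ds.map Ident.ch) P) (.input (.ch c) xs Q)⟩ 0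
          ⟨M, .par P (Q.subst (substOf xs ds))⟩
  | ifThen {M : Finset Chan} {c : Chan} {P Q : Proc} :
      c ∈ M → Red ⟨M, .ifeq (.ch c) (.ch c) P Q⟩ 0 ⟨M, P⟩
  | ifElse {M : Finset Chan} {c d : Chan} {P Q : Proc} :
      c ∈ M → d ∈ M → c ≠ d → Red ⟨M, .ifeq (.ch c) (.ch d) P Q⟩ 0 ⟨M, Q⟩
  | unfold {M : Finset Chan} {w : Var} {P : Proc} :
      Red ⟨M, .recur w P⟩ 0 ⟨M, P.substProc w (.recur w P)⟩
  | alloc {M : Finset Chan} {c : Chan} {x : Var} {P : Proc} :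
      c ∉ M → Red ⟨M, .alloc x P⟩ 1 ⟨insert c M, P.subst (substOf [x] [c])⟩
  | free {M : Finset Chan} {c : Chan} {P : Proc} :
      c ∈ M → Red ⟨M, .free (.ch c) P⟩ (-1) ⟨M.erase c, P⟩
  | str {M M' : Finset Chan} {P P' Q Q' : Proc} {k : ℤ} :
      StructEq P P' → Red ⟨M, P'⟩ k ⟨M', Q'⟩ → StructEq Q' Q → Red ⟨M, P⟩ k ⟨M', Q⟩
  | parL {M M' : Finset Chan} {P P' Q : Proc} {k : ℤ} :
      Red ⟨M, P⟩ k ⟨M', P'⟩ → Red ⟨M, .par P Q⟩ k ⟨M', .par P' Q⟩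
  | parR {M M' : Finset Chan} {P Q Q' : Proc} {k : ℤ} :
      Red ⟨M, Q⟩ k ⟨M', Q'⟩ → Red ⟨M, .par P Q⟩ k ⟨M', .par P Q'⟩

/-- Reflexive-transitive closure of reduction, accumulating costs. -/
inductive RedStar : System → ℤ → System → Prop
  | refl (S) : RedStar S 0 S
  | step {S S' S'' : System} {k l : ℤ} :
      RedStar S k S' → Red S' l S'' → RedStar S (k + l) S''

/-- Actions of the (pre-)LTS. -/
inductive Act : Type
  | out (c : Chan) (ds : List Chan)
  | inp (c : Chan) (ds : List Chan)
  | tau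
  | alloc
  | free (c : Chan)
  | env

/-- The pre-LTS over triples Γ ◃ M ▹ P. -/
inductive PreStep : TyEnv → System → Act → ℤ → TyEnv → System → Prop
  | lOut {Γ Δ : TyEnv} {c : Chan} {ts : List Ty} {a : Attr} {ds : List Chan}
      {P : Proc} {M : Finset Chan} :
      predEnv (.ch c) ts a = some Δ → ds.length = ts.length →
      PreStep (Γ + {(Ident.ch c, Ty.chan ts a)})
        ⟨M, .output (.ch c) (ds.map Ident.ch) P⟩ (.out c ds) 0
        (Γ + Δ + Multiset.ofList ((ds.map Ident.ch).zip ts)) ⟨M, P⟩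
  | lIn {Γ Δ : TyEnv} {c : Chan} {ts : List Ty} {a : Attr} {ds : List Chan}
      {xs : List Var} {P : Proc} {M : Finset Chan} :
      predEnv (.ch c) ts a = some Δ → ds.length = ts.length → xs.length = ds.length →
      PreStep (Γ + {(Ident.ch c, Ty.chan ts a)} + Multiset.ofList ((ds.map Ident.ch).zip ts))
        ⟨M, .input (.ch c) xs P⟩ (.inp c ds) 0
        (Γ + Δ) ⟨M, P.subst (substOf xs ds)⟩
  | lComL {Γ₁ Γ₁' Γ₂ Γ₂' Γ : TyEnv} {M : Finset Chan} {c : Chan} {ds : List Chan}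
      {P P' Q Q' : Proc} :
      PreStep Γ₁ ⟨M, P⟩ (.out c ds) 0 Γ₁' ⟨M, P'⟩ →
      PreStep Γ₂ ⟨M, Q⟩ (.inp c ds) 0 Γ₂' ⟨M, Q'⟩ →
      PreStep Γ ⟨M, .par P Q⟩ .tau 0 Γ ⟨M, .par P' Q'⟩
  | lComR {Γ₁ Γ₁' Γ₂ Γ₂' Γ : TyEnv} {M : Finset Chan} {c : Chan} {ds : List Chan}
      {P P' Q Q' : Proc} :
      PreStep Γ₁ ⟨M, Q⟩ (.out c ds) 0 Γ₁' ⟨M, Q'⟩ →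
      PreStep Γ₂ ⟨M, P⟩ (.inp c ds) 0 Γ₂' ⟨M, P'⟩ →
      PreStep Γ ⟨M, .par P Q⟩ .tau 0 Γ ⟨M, .par P' Q'⟩
  | lParL {Γ Γ' : TyEnv} {M M' : Finset Chan} {P P' Q : Proc} {μ : Act} {k : ℤ} :
      PreStep Γ ⟨M, P⟩ μ k Γ' ⟨M', P'⟩ →
      PreStep Γ ⟨M, .par P Q⟩ μ k Γ' ⟨M', .par P' Q⟩
  | lParR {Γ Γ' : TyEnv} {M M' : Finset Chan} {P Q Q' : Proc} {μ : Act} {k : ℤ} :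
      PreStep Γ ⟨M, Q⟩ μ k Γ' ⟨M', Q'⟩ →
      PreStep Γ ⟨M, .par P Q⟩ μ k Γ' ⟨M', .par P Q'⟩
  | lStr {Γ Γ' : TyEnv} {M : Finset Chan} {P : Proc} :
      EnvStruct Γ Γ' → PreStep Γ ⟨M, P⟩ .env 0 Γ' ⟨M, P⟩
  | lRec {Γ : TyEnv} {M : Finset Chan} {w : Var} {P : Proc} :
      PreStep Γ ⟨M, .recur w P⟩ .tau 0 Γ ⟨M, P.substProc w (.recur w P)⟩
  | lThen {Γ : TyEnv} {M : Finset Chan} {c : Chan} {P Q : Proc} :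
      c ∈ M → PreStep Γ ⟨M, .ifeq (.ch c) (.ch c) P Q⟩ .tau 0 Γ ⟨M, P⟩
  | lElse {Γ : TyEnv} {M : Finset Chan} {c d : Chan} {P Q : Proc} :
      c ∈ M → d ∈ M → c ≠ d →
      PreStep Γ ⟨M, .ifeq (.ch c) (.ch d) P Q⟩ .tau 0 Γ ⟨M, Q⟩
  | lAll {Γ : TyEnv} {M : Finset Chan} {c : Chan} {x : Var} {P : Proc} :
      c ∉ M →
      PreStep Γ ⟨M, .alloc x P⟩ .tau 1 Γ ⟨insert c M, P.subst (substOf [x] [c])⟩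
  | lAllE {Γ : TyEnv} {M : Finset Chan} {c : Chan} {ts : List Ty} {P : Proc} :
      c ∉ M →
      PreStep Γ ⟨M, P⟩ .alloc 1 (Γ + {(Ident.ch c, Ty.chan ts (.unq 0))}) ⟨insert c M, P⟩
  | lFree {Γ : TyEnv} {M : Finset Chan} {c : Chan} {P : Proc} :
      c ∉ M → PreStep Γ ⟨insert c M, .free (.ch c) P⟩ .tau (-1) Γ ⟨M, P⟩
  | lFreeE {Γ : TyEnv} {M : Finset Chan} {c : Chan} {ts : List Ty} {P : Proc} :
      c ∉ M →
      PreStep (Γ + {(Ident.ch c, Ty.chan ts (.unq 0))}) ⟨insert c M, P⟩ (.free c) (-1) Γ ⟨M, P⟩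

/-- The costed LTS: the pre-LTS closed under renamings that are invisible to
the observer (rule lRen). -/
def Step (Γ : TyEnv) (S : System) (μ : Act) (k : ℤ) (Γ' : TyEnv) (S' : System) : Prop :=
  ∃ σ : Equiv.Perm Chan, (∀ c ∈ TyEnv.domChans Γ, σ c = c) ∧
    PreStep Γ (S.rename ⇑σ) μ k Γ' S'

/-- Weak (cost-accumulating) transitions. -/
inductive Weak : TyEnv → System → Act → ℤ → TyEnv → System → Prop
  | single {Γ Γ' : TyEnv} {S S' : System} {μ : Act} {k : ℤ} :
      Step Γ S μ k Γ' S' → Weak Γ S μ k Γ' S'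
  | tauLeft {Γ Γ₁ Γ' : TyEnv} {S S₁ S' : System} {μ : Act} {l k : ℤ} :
      Step Γ S .tau l Γ₁ S₁ → Weak Γ₁ S₁ μ k Γ' S' → Weak Γ S μ (l + k) Γ' S'
  | tauRight {Γ Γ₁ Γ' : TyEnv} {S S₁ S' : System} {μ : Act} {l k : ℤ} :
      Weak Γ S μ l Γ₁ S₁ → Step Γ₁ S₁ .tau k Γ' S' → Weak Γ S μ (l + k) Γ' S'

/-- Weak μ̂ transition: for μ = τ the matching move may be empty. -/
def WeakHat (Γ : TyEnv) (S : System) (μ : Act) (k : ℤ) (Γ' : TyEnv) (S' : System) : Prop :=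
  Weak Γ S μ k Γ' S' ∨ (μ = .tau ∧ k = 0 ∧ Γ' = Γ ∧ S' = S)

/-- Amortised type-indexed relations on systems. -/
abbrev ARel := TyEnv → ℕ → System → System → Prop

/-- Both related triples must be configurations. -/
def IsAmortisedRel (R : ARel) : Prop :=
  ∀ Γ n S T, R Γ n S T → IsConfig Γ S ∧ IsConfig Γ T

/-- Amortised typed bisimulation. -/
def IsAmortisedBisim (R : ARel) : Prop :=
  IsAmortisedRel R ∧
  ∀ Γ n S T, R Γ n S T →
    (∀ μ k Γ' S', Step Γ S μ k Γ' S' →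
      ∃ (T' : System) (l : ℤ) (m : ℕ), WeakHat Γ T μ l Γ' T' ∧ (m : ℤ) = (n : ℤ) + l - k ∧ R Γ' m S' T') ∧
    (∀ μ l Γ' T', Step Γ T μ l Γ' T' →
      ∃ (S' : System) (k : ℤ) (m : ℕ), WeakHat Γ S μ k Γ' S' ∧ (m : ℤ) = (n : ℤ) + l - k ∧ R Γ' m S' T')

/-- Amortised bisimilarity at Γ with credit n : Γ ⊨ S ≲ⁿ T. -/
def Bisim (Γ : TyEnv) (n : ℕ) (S T : System) : Prop :=
  ∃ R : ARel, IsAmortisedBisim R ∧ R Γ n S T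

/-- Γ ⊨ S ≲ T : bisimilarity at some credit. -/
def BisimAny (Γ : TyEnv) (S T : System) : Prop := ∃ n, Bisim Γ n S T

/-- Bounded by m : every credit occurring in the relation is at most m. -/
def BoundedBy (R : ARel) (m : ℕ) : Prop := ∀ Γ n S T, R Γ n S T → n ≤ m

/-- Γ ⊨^m S ≲ T : related by some m-bounded amortised typed bisimulation. -/
def BoundedBisim (m : ℕ) (Γ : TyEnv) (S T : System) : Prop :=
  ∃ (R : ARel) (n : ℕ), IsAmortisedBisim R ∧ BoundedBy R m ∧ n ≤ m ∧ R Γ n S T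

/-- Barbs: (Γ ◃ M ▹ P) ⇓ c. -/
def Barb (Γ : TyEnv) (S : System) (c : Chan) : Prop :=
  (∃ (k : ℤ) (M' : Finset Chan) (R P' : Proc) (ds : List Ident) (P'' : Proc),
      RedStar S k ⟨M', R⟩ ∧ StructEq R (.par P' (.output (.ch c) ds P''))) ∧
  c ∈ TyEnv.domChans Γ

def BarbPreserving (R : ARel) : Prop :=
  ∀ Γ n S T, R Γ n S T → ∀ c, (Barb Γ S c ↔ Barb Γ T c)

def CostImproving (R : ARel) : Prop :=
  ∀ Γ n S T, R Γ n S T →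
    (∀ (k : ℤ) (S' : System), Red S k S' →
      ∃ (l : ℤ) (T' : System) (m : ℕ),
        RedStar T l T' ∧ (m : ℤ) = (n : ℤ) + l - k ∧ R Γ m S' T') ∧
    (∀ (l : ℤ) (T' : System), Red T l T' →
      ∃ (k : ℤ) (S' : System) (m : ℕ),
        RedStar S k S' ∧ (m : ℤ) = (n : ℤ) + l - k ∧ R Γ m S' T')

def FullyContextual (R : ARel) : Prop :=
  ∀ Γ n S T, R Γ n S T →
    (∀ (c : Chan) (ts : List Ty), c ∉ S.res → c ∉ T.res →
      R (Γ + {(Ident.ch c, Ty.chan ts (.unq 0))}) n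
        ⟨insert c S.res, S.proc⟩ ⟨insert c T.res, T.proc⟩) ∧
    (∀ (Γ₁ Γ₂ : TyEnv) (R₀ : Proc), EnvStruct Γ (Γ₁ + Γ₂) → HasTy Γ₂ R₀ →
      R Γ₁ n ⟨S.res, .par S.proc R₀⟩ ⟨T.res, .par T.proc R₀⟩ ∧
      R Γ₁ n ⟨S.res, .par R₀ S.proc⟩ ⟨T.res, .par R₀ T.proc⟩)

def IsContextualFamily (R : ARel) : Prop :=
  IsAmortisedRel R ∧ BarbPreserving R ∧ CostImproving R ∧ FullyContextual R

/-- The behavioural contextual preorder Γ ⊨ S ⊑ⁿ T. -/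
def CtxPre (Γ : TyEnv) (n : ℕ) (S T : System) : Prop :=
  ∃ R : ARel, IsContextualFamily R ∧ R Γ n S T

def CtxPreAny (Γ : TyEnv) (S T : System) : Prop := ∃ n, CtxPre Γ n S T
/-! ### Auxiliary lemmas about renaming -/

section RenameLemmas

lemma Ident.rename_rename (f g : Chan → Chan) (u : Ident) :
    (u.rename f).rename g = u.rename (g ∘ f) := by cases u <;> rfl

lemma Ident.rename_id (u : Ident) : u.rename id = u := by cases u <;> rfl

lemma Ident.rename_comp (f g : Chan → Chan) :
    Ident.rename g ∘ Ident.rename f = Ident.rename (g ∘ f) :=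
  funext (Ident.rename_rename f g)

lemma Ident.rename_id' : Ident.rename id = id := funext Ident.rename_id

lemma Proc.rename_rename (f g : Chan → Chan) (P : Proc) :
    (P.rename f).rename g = P.rename (g ∘ f) := by
  induction P <;>
    simp_all [Proc.rename, Ident.rename_rename, List.map_map, Ident.rename_comp]

lemma Proc.rename_id (P : Proc) : P.rename id = P := by
  induction P <;> simp_all [Proc.rename, Ident.rename_id, Ident.rename_id']

lemma TyEnv.rename_rename (f g : Chan → Chan) (Γ : TyEnv) :
    (Γ.rename f).rename g = Γ.rename (g ∘ f) := by
  simp [TyEnv.rename, Multiset.map_map, Function.comp_def, Ident.rename_rename]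

lemma TyEnv.rename_id (Γ : TyEnv) : Γ.rename id = Γ := by
  simp only [TyEnv.rename]
  rw [show (fun p : Ident × Ty => (p.1.rename id, p.2)) = id by
    funext p; simp [Ident.rename_id]]
  exact Multiset.map_id Γ

lemma System.rename_rename (f g : Chan → Chan) (S : System) :
    (S.rename f).rename g = S.rename (g ∘ f) := by
  simp [System.rename, Finset.image_image, Proc.rename_rename]

lemma System.rename_id (S : System) : S.rename id = S := by
  simp [System.rename, Proc.rename_id]

lemma TyEnv.rename_add (Γ Δ : TyEnv) (σ : Chan → Chan) :
    (Γ + Δ).rename σ = Γ.rename σ + Δ.rename σ := Multiset.map_add _ _ _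

lemma TyEnv.rename_zero (σ : Chan → Chan) : (0 : TyEnv).rename σ = 0 := rfl

lemma TyEnv.rename_singleton (u : Ident) (T : Ty) (σ : Chan → Chan) :
    TyEnv.rename {(u, T)} σ = {(u.rename σ, T)} := Multiset.map_singleton _ _

lemma TyEnv.rename_pair (u : Ident) (T₁ T₂ : Ty) (σ : Chan → Chan) :
    TyEnv.rename {(u, T₁), (u, T₂)} σ = {(u.rename σ, T₁), (u.rename σ, T₂)} := by
  simp [TyEnv.rename]

lemma Ident.vars_rename (σ : Chan → Chan) (u : Ident) :
    (u.rename σ).vars = u.vars := by cases u <;> rfl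

lemma listVars_rename (σ : Chan → Chan) (l : List Ident) :
    listVars (l.map (Ident.rename σ)) = listVars l := by
  ext x
  simp only [listVars, Set.mem_setOf_eq, List.mem_map]
  constructor
  · rintro ⟨u, ⟨v, hv, rfl⟩, hx⟩; exact ⟨v, hv, by rwa [Ident.vars_rename] at hx⟩
  · rintro ⟨u, hu, hx⟩; exact ⟨u.rename σ, ⟨u, hu, rfl⟩, by rwa [Ident.vars_rename]⟩

lemma Proc.freeVars_rename (σ : Chan → Chan) (P : Proc) :
    (P.rename σ).freeVars = P.freeVars := by
  induction P <;> simp_all [Proc.rename, Proc.freeVars, Ident.vars_rename, listVars_rename]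

lemma TyEnv.mem_domChans_rename {Γ : TyEnv} {σ : Chan → Chan} {c : Chan} :
    c ∈ (Γ.rename σ).domChans ↔ ∃ d ∈ Γ.domChans, σ d = c := by
  constructor
  · rintro ⟨T, hT⟩
    simp only [TyEnv.rename, Multiset.mem_map] at hT
    obtain ⟨⟨u, T'⟩, hu, h⟩ := hT
    cases u with
    | ch d =>
      simp only [Ident.rename, Prod.mk.injEq, Ident.ch.injEq] at h
      exact ⟨d, ⟨T', hu⟩, h.1⟩
    | var x => simp [Ident.rename] at h
  · rintro ⟨d, ⟨T, hT⟩, rfl⟩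
    exact ⟨T, Multiset.mem_map.2 ⟨(Ident.ch d, T), hT, rfl⟩⟩

lemma envStruct_rename (σ : Chan → Chan) {Γ Γ' : TyEnv} (h : EnvStruct Γ Γ') :
    EnvStruct (Γ.rename σ) (Γ'.rename σ) := by
  induction h with
  | refl => exact .refl _
  | trans _ _ ih₁ ih₂ => exact .trans ih₁ ih₂
  | con hs =>
      rw [TyEnv.rename_add, TyEnv.rename_add, TyEnv.rename_singleton, TyEnv.rename_pair]
      exact .con hs
  | join hs =>
      rw [TyEnv.rename_add, TyEnv.rename_add, TyEnv.rename_singleton, TyEnv.rename_pair]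
      exact .join hs
  | weak Γ u T => rw [TyEnv.rename_add, TyEnv.rename_singleton]; exact .weak _ _ _
  | tyEq he =>
      rw [TyEnv.rename_add, TyEnv.rename_add, TyEnv.rename_singleton, TyEnv.rename_singleton]
      exact .tyEq he
  | sub hs =>
      rw [TyEnv.rename_add, TyEnv.rename_add, TyEnv.rename_singleton, TyEnv.rename_singleton]
      exact .sub hs
  | rev Γ u ts₁ ts₂ =>
      rw [TyEnv.rename_add, TyEnv.rename_add, TyEnv.rename_singleton, TyEnv.rename_singleton]
      exact .rev _ _ _ _

lemma Ident.rename_injective {σ : Chan → Chan} (hσ : Function.Injective σ) :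
    Function.Injective (Ident.rename σ) := by
  intro u v h
  cases u <;> cases v <;> simp_all [Ident.rename]
  exact hσ h

lemma TyEnv.isPartialMap_rename {Γ : TyEnv} {σ : Chan → Chan}
    (hσ : Function.Injective σ) (h : Γ.IsPartialMap) : (Γ.rename σ).IsPartialMap := by
  unfold TyEnv.IsPartialMap at *
  rw [TyEnv.rename, Multiset.map_map]
  rw [show (Prod.fst ∘ fun p : Ident × Ty => (p.1.rename σ, p.2)) =
    (Ident.rename σ) ∘ Prod.fst from rfl, ← Multiset.map_map]
  exact h.map (Ident.rename_injective hσ)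

lemma TyEnv.consistent_rename {Γ : TyEnv} {σ : Chan → Chan}
    (hσ : Function.Injective σ) (h : Γ.Consistent) : (Γ.rename σ).Consistent := by
  obtain ⟨Γ', hpm, hes⟩ := h
  exact ⟨Γ'.rename σ, TyEnv.isPartialMap_rename hσ hpm, envStruct_rename σ hes⟩

lemma predEnv_rename {u : Ident} {ts : List Ty} {a : Attr} {Δ : TyEnv}
    (σ : Chan → Chan) (h : predEnv u ts a = some Δ) :
    predEnv (u.rename σ) ts a = some (Δ.rename σ) := by
  cases a with
  | unr => simp_all [predEnv, TyEnv.rename_singleton]; rw [← h]; rfl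
  | aff => simp_all [predEnv]; rw [← h]; rfl
  | unq i =>
    cases i with
    | zero => simp [predEnv] at h
    | succ j => simp_all [predEnv]; rw [← h]; rfl

lemma rename_zip (σ : Chan → Chan) (vs : List Ident) (ts : List Ty) :
    TyEnv.rename (Multiset.ofList (vs.zip ts)) σ =
      Multiset.ofList ((vs.map (Ident.rename σ)).zip ts) := by
  induction vs generalizing ts with
  | nil => rfl
  | cons v vs ih =>
    cases ts with
    | nil => rfl
    | cons t ts => simp [TyEnv.rename, List.zip_cons_cons] at *; exact ih ts

lemma rename_zip_var (σ : Chan → Chan) (xs : List Var) (ts : List Ty) :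
    TyEnv.rename (Multiset.ofList ((xs.map Ident.var).zip ts)) σ =
      Multiset.ofList ((xs.map Ident.var).zip ts) := by
  rw [rename_zip]
  congr 1
  rw [List.map_map]
  simp [Function.comp_def, Ident.rename]

lemma TyEnv.unrestricted_rename {Γ : TyEnv} (σ : Chan → Chan)
    (h : Γ.Unrestricted) : (Γ.rename σ).Unrestricted := by
  intro p hp
  simp only [TyEnv.rename, Multiset.mem_map] at hp
  obtain ⟨q, hq, rfl⟩ := hp
  exact h q hq

lemma HasTy.rename {Γ : TyEnv} {P : Proc} (σ : Chan → Chan) (h : HasTy Γ P) :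
    HasTy (Γ.rename σ) (P.rename σ) := by
  induction h with
  | @out Γ Δ u ts a vs P hpe hlen _ ih =>
      rw [TyEnv.rename_add, TyEnv.rename_add, TyEnv.rename_singleton, rename_zip]
      rw [TyEnv.rename_add] at ih
      exact HasTy.out (predEnv_rename σ hpe) (by simpa using hlen) ih
  | @inp Γ Δ u ts a xs P hpe hlen _ ih =>
      rw [TyEnv.rename_add, TyEnv.rename_singleton]
      rw [TyEnv.rename_add, TyEnv.rename_add, rename_zip_var] at ih
      exact HasTy.inp (predEnv_rename σ hpe) hlen ih
  | par _ _ ih₁ ih₂ => rw [TyEnv.rename_add]; exact HasTy.par ih₁ ih₂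
  | ifeq hu hv _ _ ihP ihQ =>
      refine HasTy.ifeq ?_ ?_ ihP ihQ
      · obtain ⟨T, hT⟩ := hu; exact ⟨T, Multiset.mem_map.2 ⟨(_, T), hT, rfl⟩⟩
      · obtain ⟨T, hT⟩ := hv; exact ⟨T, Multiset.mem_map.2 ⟨(_, T), hT, rfl⟩⟩
  | @recur Γ w P hunr _ ih =>
      refine HasTy.recur (TyEnv.unrestricted_rename σ hunr) ?_
      rw [TyEnv.rename_add, TyEnv.rename_singleton] at ih
      exact ih
  | pvar w =>
      have : TyEnv.rename {(Ident.var w, Ty.proc)} σ = {(Ident.var w, Ty.proc)} := by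
        rw [TyEnv.rename_singleton]; rfl
      rw [this]; exact HasTy.pvar w
  | @free Γ P u ts _ ih =>
      rw [TyEnv.rename_add, TyEnv.rename_singleton]
      exact HasTy.free ih
  | @alloc Γ x ts P _ ih =>
      refine HasTy.alloc (ts := ts) ?_
      rw [TyEnv.rename_add, TyEnv.rename_singleton] at ih
      exact ih
  | nil => exact HasTy.nil
  | str _ hes ih => exact HasTy.str ih (envStruct_rename σ hes)

lemma isConfig_rename {Γ : TyEnv} {S : System} (σ : Equiv.Perm Chan)
    (h : IsConfig Γ S) : IsConfig (Γ.rename σ) (S.rename σ) := by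
  obtain ⟨hcl, hdom, Δ, hcons, hty, hdomΔ⟩ := h
  refine ⟨?_, ?_, Δ.rename σ, ?_, HasTy.rename σ hty, ?_⟩
  · unfold Proc.Closed at *
    rw [System.rename, Proc.freeVars_rename]; exact hcl
  · intro c hc
    obtain ⟨d, hd, rfl⟩ := TyEnv.mem_domChans_rename.1 hc
    exact Finset.mem_coe.2 (Finset.mem_image_of_mem σ (hdom hd))
  · rw [← TyEnv.rename_add]; exact TyEnv.consistent_rename σ.injective hcons
  · intro c hc
    obtain ⟨d, hd, rfl⟩ := TyEnv.mem_domChans_rename.1 hc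
    exact Finset.mem_coe.2 (Finset.mem_image_of_mem σ (hdomΔ hd))

/-! ### Renaming commutes with substitution -/

lemma Ident.rename_subst (σ : Chan → Chan) (θ : Var → Option Chan) (u : Ident) :
    (u.subst θ).rename σ = (u.rename σ).subst (fun x => (θ x).map σ) := by
  cases u with
  | ch c => rfl
  | var x => cases h : θ x <;> simp [Ident.subst, Ident.rename, h]

lemma removeVars_map (σ : Chan → Chan) (θ : Var → Option Chan) (xs : List Var) :
    removeVars (fun x => (θ x).map σ) xs = fun x => ((removeVars θ xs) x).map σ := by
  funext x
  simp only [removeVars]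
  split <;> rfl

lemma Proc.rename_subst (σ : Chan → Chan) (θ : Var → Option Chan) (P : Proc) :
    (P.subst θ).rename σ = (P.rename σ).subst (fun x => (θ x).map σ) := by
  induction P generalizing θ with
  | output u vs P ih =>
      simp [Proc.subst, Proc.rename, ih, List.map_map, Ident.rename_subst,
        Function.comp_def]
  | input u xs P ih => simp [Proc.subst, Proc.rename, ih, Ident.rename_subst, removeVars_map]
  | nil => rfl
  | ifeq u v P Q ihP ihQ => simp [Proc.subst, Proc.rename, ihP, ihQ, Ident.rename_subst]
  | recur w P ih => simp [Proc.subst, Proc.rename, ih, removeVars_map]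
  | pvar w => rfl
  | par P Q ihP ihQ => simp [Proc.subst, Proc.rename, ihP, ihQ]
  | alloc x P ih => simp [Proc.subst, Proc.rename, ih, removeVars_map]
  | free u P ih => simp [Proc.subst, Proc.rename, ih, Ident.rename_subst]

lemma substOf_map (σ : Chan → Chan) (xs : List Var) (ds : List Chan) :
    (fun x => (substOf xs ds x).map σ) = substOf xs (ds.map σ) := by
  funext x
  simp only [substOf]
  induction xs generalizing ds with
  | nil => rfl
  | cons y ys ih =>
    cases ds with
    | nil => rfl
    | cons d ds =>
      simp only [List.map_cons, List.zip_cons_cons, List.lookup]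
      split
      · rfl
      · simpa [List.zip] using ih ds

lemma Proc.rename_substOf (σ : Chan → Chan) (xs : List Var) (ds : List Chan) (P : Proc) :
    (P.subst (substOf xs ds)).rename σ = (P.rename σ).subst (substOf xs (ds.map σ)) := by
  rw [Proc.rename_subst, substOf_map]

lemma Proc.rename_substProc (σ : Chan → Chan) (w : Var) (P Q : Proc) :
    (Proc.substProc w P Q).rename σ = Proc.substProc w (P.rename σ) (Q.rename σ) := by
  induction Q with
  | output u vs Q ih => simp [Proc.substProc, Proc.rename, ih]
  | input u xs Q ih =>
      simp only [Proc.substProc, Proc.rename]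
      split <;> simp_all [Proc.substProc, Proc.rename]
  | nil => rfl
  | ifeq u v Q₁ Q₂ ih₁ ih₂ => simp [Proc.substProc, Proc.rename, ih₁, ih₂]
  | recur w' Q ih =>
      simp only [Proc.substProc, Proc.rename]
      split <;> simp_all [Proc.substProc, Proc.rename]
  | pvar w' =>
      simp only [Proc.substProc, Proc.rename]
      split <;> simp_all [Proc.substProc, Proc.rename]
  | par Q₁ Q₂ ih₁ ih₂ => simp [Proc.substProc, Proc.rename, ih₁, ih₂]
  | alloc x Q ih =>
      simp only [Proc.substProc, Proc.rename]
      split <;> simp_all [Proc.substProc, Proc.rename]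
  | free u Q ih => simp [Proc.substProc, Proc.rename, ih]

/-! ### Renaming the LTS -/

/-- Renaming of actions. -/
def Act.rename (σ : Chan → Chan) : Act → Act
  | .out c ds => .out (σ c) (ds.map σ)
  | .inp c ds => .inp (σ c) (ds.map σ)
  | .tau => .tau
  | .alloc => .alloc
  | .free c => .free (σ c)
  | .env => .env

lemma Act.rename_rename (f g : Chan → Chan) (μ : Act) :
    (μ.rename f).rename g = μ.rename (g ∘ f) := by
  cases μ <;> simp [Act.rename, List.map_map]

lemma Act.rename_id (μ : Act) : μ.rename id = μ := by
  cases μ <;> simp [Act.rename]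

lemma Act.rename_eq_tau {σ : Chan → Chan} {μ : Act} (h : μ.rename σ = .tau) : μ = .tau := by
  cases μ <;> simp_all [Act.rename]

lemma map_ch_rename (σ : Chan → Chan) (ds : List Chan) :
    (ds.map Ident.ch).map (Ident.rename σ) = (ds.map σ).map Ident.ch := by
  simp [List.map_map, Function.comp_def, Ident.rename]

lemma preStep_rename {Γ Γ' : TyEnv} {S S' : System} {μ : Act} {k : ℤ}
    (σ : Equiv.Perm Chan) (h : PreStep Γ S μ k Γ' S') :
    PreStep (Γ.rename σ) (S.rename σ) (μ.rename σ) k (Γ'.rename σ) (S'.rename σ) := by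
  induction h with
  | @lOut Γ Δ c ts a ds P M hpe hlen =>
      simp only [System.rename, Proc.rename, Ident.rename, Act.rename,
        TyEnv.rename_add, TyEnv.rename_singleton, rename_zip, map_ch_rename]
      exact PreStep.lOut (predEnv_rename σ hpe) (by simpa using hlen)
  | @lIn Γ Δ c ts a ds xs P M hpe hlen hxs =>
      simp only [System.rename, Proc.rename, Ident.rename, Act.rename,
        TyEnv.rename_add, TyEnv.rename_singleton, rename_zip, map_ch_rename,
        Proc.rename_substOf]
      exact PreStep.lIn (predEnv_rename σ hpe) (by simpa using hlen) (by simpa using hxs)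
  | lComL _ _ ih₁ ih₂ =>
      simp only [System.rename, Proc.rename, Act.rename] at *
      exact PreStep.lComL ih₁ ih₂
  | lComR _ _ ih₁ ih₂ =>
      simp only [System.rename, Proc.rename, Act.rename] at *
      exact PreStep.lComR ih₁ ih₂
  | lParL _ ih =>
      simp only [System.rename, Proc.rename] at *
      exact PreStep.lParL ih
  | lParR _ ih =>
      simp only [System.rename, Proc.rename] at *
      exact PreStep.lParR ih
  | lStr hes => exact PreStep.lStr (envStruct_rename σ hes)
  | lRec =>
      simp only [System.rename, Proc.rename, Act.rename, Proc.rename_substProc]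
      exact PreStep.lRec
  | lThen hc =>
      simp only [System.rename, Proc.rename, Ident.rename, Act.rename]
      exact PreStep.lThen (Finset.mem_image_of_mem σ hc)
  | lElse hc hd hne =>
      simp only [System.rename, Proc.rename, Ident.rename, Act.rename]
      exact PreStep.lElse (Finset.mem_image_of_mem σ hc) (Finset.mem_image_of_mem σ hd)
        (fun he => hne (σ.injective he))
  | @lAll Γ M c x P hc =>
      simp only [System.rename, Proc.rename, Act.rename, Finset.image_insert,
        Proc.rename_substOf]
      exact PreStep.lAll (by simp [σ.injective.eq_iff]; exact hc)
  | @lAllE Γ M c ts P hc =>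
      simp only [System.rename, Act.rename, Finset.image_insert,
        TyEnv.rename_add, TyEnv.rename_singleton, Ident.rename]
      exact PreStep.lAllE (by simp [σ.injective.eq_iff]; exact hc)
  | @lFree Γ M c P hc =>
      simp only [System.rename, Proc.rename, Ident.rename, Act.rename, Finset.image_insert]
      exact PreStep.lFree (by simp [σ.injective.eq_iff]; exact hc)
  | @lFreeE Γ M c ts P hc =>
      simp only [System.rename, Act.rename, Finset.image_insert,
        TyEnv.rename_add, TyEnv.rename_singleton, Ident.rename]
      exact PreStep.lFreeE (by simp [σ.injective.eq_iff]; exact hc)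

lemma step_rename {Γ Γ' : TyEnv} {S S' : System} {μ : Act} {k : ℤ}
    (σ : Equiv.Perm Chan) (h : Step Γ S μ k Γ' S') :
    Step (Γ.rename σ) (S.rename σ) (μ.rename σ) k (Γ'.rename σ) (S'.rename σ) := by
  obtain ⟨ρ, hρ, hpre⟩ := h
  refine ⟨(σ.symm.trans ρ).trans σ, ?_, ?_⟩
  · intro c hc
    obtain ⟨d, hd, rfl⟩ := TyEnv.mem_domChans_rename.1 hc
    simp [Equiv.trans_apply, hρ d hd]
  · have : (S.rename ⇑σ).rename ⇑((σ.symm.trans ρ).trans σ) = (S.rename ⇑ρ).rename ⇑σ := by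
      rw [System.rename_rename, System.rename_rename]
      congr 1
      funext x
      simp [Equiv.trans_apply]
    rw [this]
    exact preStep_rename σ hpre

lemma weak_rename {Γ Γ' : TyEnv} {S S' : System} {μ : Act} {k : ℤ}
    (σ : Equiv.Perm Chan) (h : Weak Γ S μ k Γ' S') :
    Weak (Γ.rename σ) (S.rename σ) (μ.rename σ) k (Γ'.rename σ) (S'.rename σ) := by
  induction h with
  | single hs => exact Weak.single (step_rename σ hs)
  | tauLeft hs _ ih =>
      have := step_rename σ hs
      rw [show Act.rename σ .tau = .tau from rfl] at this
      exact Weak.tauLeft this ih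
  | tauRight _ hs ih =>
      have := step_rename σ hs
      rw [show Act.rename σ .tau = .tau from rfl] at this
      exact Weak.tauRight ih this

lemma weakHat_rename {Γ Γ' : TyEnv} {S S' : System} {μ : Act} {k : ℤ}
    (σ : Equiv.Perm Chan) (h : WeakHat Γ S μ k Γ' S') :
    WeakHat (Γ.rename σ) (S.rename σ) (μ.rename σ) k (Γ'.rename σ) (S'.rename σ) := by
  rcases h with h | ⟨rfl, rfl, rfl, rfl⟩
  · exact Or.inl (weak_rename σ h)
  · exact Or.inr ⟨rfl, rfl, rfl, rfl⟩

/-! ### Closing a bisimulation under renaming -/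

lemma TyEnv.rename_symm_cancel (σ : Equiv.Perm Chan) (Γ : TyEnv) :
    (Γ.rename σ).rename ⇑σ.symm = Γ := by
  rw [TyEnv.rename_rename, show (⇑σ.symm ∘ ⇑σ) = id from σ.symm_comp_self, TyEnv.rename_id]

lemma TyEnv.rename_cancel_symm (σ : Equiv.Perm Chan) (Γ : TyEnv) :
    (Γ.rename ⇑σ.symm).rename σ = Γ := by
  rw [TyEnv.rename_rename, show (⇑σ ∘ ⇑σ.symm) = id from σ.self_comp_symm, TyEnv.rename_id]

lemma System.rename_symm_cancel (σ : Equiv.Perm Chan) (S : System) :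
    (S.rename σ).rename ⇑σ.symm = S := by
  rw [System.rename_rename, show (⇑σ.symm ∘ ⇑σ) = id from σ.symm_comp_self, System.rename_id]

lemma System.rename_cancel_symm (σ : Equiv.Perm Chan) (S : System) :
    (S.rename ⇑σ.symm).rename σ = S := by
  rw [System.rename_rename, show (⇑σ ∘ ⇑σ.symm) = id from σ.self_comp_symm, System.rename_id]

lemma Act.rename_cancel_symm (σ : Equiv.Perm Chan) (μ : Act) :
    (μ.rename ⇑σ.symm).rename σ = μ := by
  rw [Act.rename_rename, show (⇑σ ∘ ⇑σ.symm) = id from σ.self_comp_symm, Act.rename_id]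

/-- The closure of an amortised relation under renaming by permutations. -/
def RenRel (R : ARel) : ARel := fun Γ' n S' T' =>
  ∃ (Γ₀ : TyEnv) (S₀ T₀ : System) (σ : Equiv.Perm Chan),
    Γ' = Γ₀.rename σ ∧ S' = S₀.rename σ ∧ T' = T₀.rename σ ∧ R Γ₀ n S₀ T₀

lemma renRel_bisim {R : ARel} (hR : IsAmortisedBisim R) : IsAmortisedBisim (RenRel R) := by
  obtain ⟨hrel, hbis⟩ := hR
  constructor
  · rintro Γ' n S' T' ⟨Γ₀, S₀, T₀, σ, rfl, rfl, rfl, h⟩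
    obtain ⟨hS, hT⟩ := hrel _ _ _ _ h
    exact ⟨isConfig_rename σ hS, isConfig_rename σ hT⟩
  · rintro Γ' n S' T' ⟨Γ₀, S₀, T₀, σ, rfl, rfl, rfl, h⟩
    constructor
    · intro μ k Γ'' S'' hstep
      have hstep' := step_rename σ.symm hstep
      rw [TyEnv.rename_symm_cancel, System.rename_symm_cancel] at hstep'
      obtain ⟨T₁, l, m, hweak, hm, hRm⟩ := (hbis _ _ _ _ h).1 _ _ _ _ hstep'
      refine ⟨T₁.rename σ, l, m, ?_, hm, ?_⟩
      · have := weakHat_rename σ hweak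
        rwa [Act.rename_cancel_symm, TyEnv.rename_cancel_symm] at this
      · exact ⟨Γ''.rename ⇑σ.symm, S''.rename ⇑σ.symm, T₁, σ,
          (TyEnv.rename_cancel_symm σ Γ'').symm, (System.rename_cancel_symm σ S'').symm,
          rfl, hRm⟩
    · intro μ l Γ'' T'' hstep
      have hstep' := step_rename σ.symm hstep
      rw [TyEnv.rename_symm_cancel, System.rename_symm_cancel] at hstep'
      obtain ⟨S₁, k, m, hweak, hm, hRm⟩ := (hbis _ _ _ _ h).2 _ _ _ _ hstep'
      refine ⟨S₁.rename σ, k, m, ?_, hm, ?_⟩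
      · have := weakHat_rename σ hweak
        rwa [Act.rename_cancel_symm, TyEnv.rename_cancel_symm] at this
      · exact ⟨Γ''.rename ⇑σ.symm, S₁, T''.rename ⇑σ.symm, σ,
          (TyEnv.rename_cancel_symm σ Γ'').symm, rfl,
          (System.rename_cancel_symm σ T'').symm, hRm⟩

lemma TyEnv.rename_fix {Γ : TyEnv} {σ : Chan → Chan}
    (hσ : ∀ c ∈ Γ.domChans, σ c = c) : Γ.rename σ = Γ := by
  rw [TyEnv.rename, show Γ = Multiset.map id Γ from (Multiset.map_id Γ).symm]
  conv_lhs => rw [Multiset.map_id Γ]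
  apply Multiset.map_congr rfl
  rintro ⟨u, T⟩ hu
  cases u with
  | ch c => simp [Ident.rename, hσ c ⟨T, hu⟩]
  | var x => rfl

end RenameLemmas

/-- Renaming preserves bisimilarity. -/
theorem renaming_preserves_bisim (Γ Δ : TyEnv) (n : ℕ) (S T : System)
    (h : Bisim (Γ + Δ) n S T)
    (σ : Equiv.Perm Chan) (hσ : ∀ c ∈ TyEnv.domChans Γ, σ c = c) :
    Bisim (Γ + TyEnv.rename Δ ⇑σ) n (S.rename ⇑σ) (T.rename ⇑σ) := by
  obtain ⟨R, hbis, hR⟩ := h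
  refine ⟨RenRel R, renRel_bisim hbis, Γ + Δ, S, T, σ, ?_, rfl, rfl, hR⟩
  rw [TyEnv.rename_add, TyEnv.rename_fix hσ]
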